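/- arXiv:1802.00605 — 4 statements merged into one kernel-verified Lean document; each statement's English description precedes it below -/
import Mathlib

section
/- (Schur's lemma for three-term recurrences) Let Φ_0 = 1, Φ_1(x) = a₁x + b₁, and Φ_m(x) = (a_m x + b_m) Φ_{m−1}(x) − c_m Φ_{m−2}(x) for m ≥ 2, with a_m c_m ≠ 0. If y₁, …, y_n are the roots of Φ_n, then ∏_{k=1}^n Φ_{n−1}(y_k) = (−1)^{n(n−1)/2} ∏_{k=1}^n a_k^{n−2k+1} c_k^{k−1}. -/
open Polynomial Finset

/-! If z₁, …, z_{n-1} are the roots of Φ_{n-1}, then ∏ᵢ Φ_{n-1}(yᵢ) and ∏ⱼ Φ_n(zⱼ) both equal the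
resultant-like product ∏ᵢⱼ (yᵢ - zⱼ), up to powers of the leading coefficients and a sign. At a root
of Φ_{n-1} the recurrence reads Φ_n(zⱼ) = -c_n Φ_{n-2}(zⱼ), so ∏ⱼ Φ_n(zⱼ) is (-c_n)^{n-1} times the
same product one level down, and the formula follows by induction on n. -/

theorem Polynomial.exists_eq_C_leadingCoeff_mul_prod_X_sub_C {K : Type*} [Field K]
    [IsAlgClosed K] (p : K[X]) {n : ℕ} (hn : p.natDegree = n) :
    ∃ z : Fin n → K, p = C p.leadingCoeff * ∏ j, (X - C (z j)) := by
  have hlen : p.roots.toList.length = n := by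
    rw [Multiset.length_toList, ← hn, ← splits_iff_card_roots.mp (IsAlgClosed.splits p)]
  refine ⟨fun j => p.roots.toList[(j : ℕ)], ?_⟩
  conv_lhs => rw [(IsAlgClosed.splits p).eq_prod_roots]
  rw [← Fin.prod_congr' _ hlen]
  simp only [Fin.val_cast]
  rw [Fin.prod_univ_fun_getElem p.roots.toList (fun x => X - C x), ← Multiset.prod_coe,
    ← Multiset.map_coe, Multiset.coe_toList]

theorem prod_eval_C_mul_prod_X_sub_C_comm {R ι κ : Type*} [CommRing R] [Fintype ι] [Fintype κ]
    (A B : R) (y : ι → R) (z : κ → R) :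
    A ^ Fintype.card κ * ∏ i, (C B * ∏ j, (X - C (z j))).eval (y i) =
      (-1) ^ (Fintype.card ι * Fintype.card κ) * B ^ Fintype.card ι *
        ∏ j, (C A * ∏ i, (X - C (y i))).eval (z j) := by
  have hneg : ∀ j, ∏ i, (z j - y i) = (-1) ^ Fintype.card ι * ∏ i, (y i - z j) := fun j => by
    rw [← card_univ, ← prod_const, ← prod_mul_distrib]
    exact prod_congr rfl fun i _ => by ring
  have hsq : ((-1 : R) ^ (Fintype.card ι * Fintype.card κ)) ^ 2 = 1 := by
    rw [← pow_mul, mul_comm, pow_mul, neg_one_sq, one_pow]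
  simp only [eval_mul, eval_C, eval_prod, eval_sub, eval_X, prod_mul_distrib, prod_const,
    card_univ, hneg]
  rw [prod_comm (s := univ) (t := univ) (f := fun j i => y i - z j), ← pow_mul]
  linear_combination (-(A ^ Fintype.card κ * B ^ Fintype.card ι * ∏ i, ∏ j, (y i - z j))) * hsq

section LinearMul

variable {R : Type*} [CommRing R] [IsDomain R] {u v : R} {p q : R[X]}

theorem Polynomial.natDegree_linear_mul (hu : u ≠ 0) (hp : p ≠ 0) :
    ((C u * X + C v) * p).natDegree = p.natDegree + 1 := by
  have hlin : C u * X + C v ≠ 0 := by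
    rw [← leadingCoeff_ne_zero, leadingCoeff_linear hu]
    exact hu
  rw [natDegree_mul hlin hp, natDegree_linear hu, add_comm]

theorem Polynomial.natDegree_linear_mul_sub (hu : u ≠ 0) (hp : p ≠ 0)
    (hq : q.natDegree ≤ p.natDegree) :
    ((C u * X + C v) * p - q).natDegree = p.natDegree + 1 := by
  rw [natDegree_sub_eq_left_of_natDegree_lt (by rw [natDegree_linear_mul hu hp]; omega),
    natDegree_linear_mul hu hp]

theorem Polynomial.leadingCoeff_linear_mul_sub (hu : u ≠ 0) (hp : p ≠ 0)
    (hq : q.natDegree ≤ p.natDegree) :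
    ((C u * X + C v) * p - q).leadingCoeff = u * p.leadingCoeff := by
  rw [leadingCoeff_sub_of_degree_lt
      (degree_lt_degree (by rw [natDegree_linear_mul hu hp]; omega)),
    leadingCoeff_mul, leadingCoeff_linear hu]

end LinearMul

structure IsThreeTermRecurrence {R : Type*} [CommRing R] (a b c : ℕ → R) (Φ : ℕ → R[X]) :
    Prop where
  zero : Φ 0 = 1
  one : Φ 1 = C (a 1) * X + C (b 1)
  add_two : ∀ m,
    Φ (m + 2) = (C (a (m + 2)) * X + C (b (m + 2))) * Φ (m + 1) - C (c (m + 2)) * Φ m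

noncomputable def schurConst {K : Type*} [Field K] (a c : ℕ → K) (n : ℕ) : K :=
  (-1) ^ (n * (n - 1) / 2) * ∏ k ∈ Icc 1 n, a k ^ ((n : ℤ) - 2 * k + 1) * c k ^ (k - 1)

theorem schurConst_succ {K : Type*} [Field K] {a : ℕ → K} (c : ℕ → K)
    (ha : ∀ k, 1 ≤ k → a k ≠ 0) (m : ℕ) :
    (∏ k ∈ Icc 1 (m + 1), a k) ^ m * schurConst a c (m + 1) =
      (∏ k ∈ Icc 1 m, a k) ^ (m + 1) * (-c (m + 1)) ^ m * schurConst a c m := by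
  have hsign :
      (-1 : K) ^ ((m + 1) * (m + 1 - 1) / 2) = (-1) ^ m * (-1) ^ (m * (m - 1) / 2) := by
    rw [← sum_range_id, ← sum_range_id, sum_range_succ, pow_add, mul_comm]
  have hfactor : ∀ k ∈ Icc 1 m, a k ^ (((m + 1 : ℕ) : ℤ) - 2 * k + 1) * c k ^ (k - 1) =
      a k * (a k ^ ((m : ℤ) - 2 * k + 1) * c k ^ (k - 1)) := fun k hk => by
    rw [Nat.cast_succ, add_sub_right_comm, add_right_comm,
      zpow_add_one₀ (ha k (mem_Icc.mp hk).1)]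
    ring
  have hlast :
      a (m + 1) ^ (((m + 1 : ℕ) : ℤ) - 2 * ((m + 1 : ℕ) : ℤ) + 1) = (a (m + 1) ^ m)⁻¹ := by
    rw [← zpow_natCast, ← zpow_neg]
    congr 1
    push_cast
    ring
  have ham : a (m + 1) ≠ 0 := ha (m + 1) m.succ_pos
  simp only [schurConst]
  rw [prod_Icc_succ_top (by omega : 1 ≤ m + 1), prod_Icc_succ_top (by omega : 1 ≤ m + 1),
    prod_congr rfl hfactor, prod_mul_distrib, hlast, hsign, Nat.add_sub_cancel, neg_pow]
  field_simp
  ring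

namespace IsThreeTermRecurrence

variable {K : Type*} [Field K] {a b c : ℕ → K} {Φ : ℕ → K[X]}

theorem natDegree_eq_and_leadingCoeff_eq (hΦ : IsThreeTermRecurrence a b c Φ)
    (ha : ∀ k, 1 ≤ k → a k ≠ 0) (m : ℕ) :
    (Φ m).natDegree = m ∧ (Φ m).leadingCoeff = ∏ k ∈ Icc 1 m, a k := by
  induction m using Nat.twoStepInduction with
  | zero => simp [hΦ.zero]
  | one => simp [hΦ.one, natDegree_linear (ha 1 le_rfl), leadingCoeff_linear (ha 1 le_rfl)]
  | more m ih₀ ih₁ =>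
    have ha' : a (m + 2) ≠ 0 := ha (m + 2) (by omega)
    have hne : Φ (m + 1) ≠ 0 := by
      rw [← leadingCoeff_ne_zero, ih₁.2, prod_ne_zero_iff]
      exact fun k hk => ha k (mem_Icc.mp hk).1
    have hq : (C (c (m + 2)) * Φ m).natDegree ≤ (Φ (m + 1)).natDegree :=
      (natDegree_C_mul_le _ _).trans (by omega)
    rw [hΦ.add_two, natDegree_linear_mul_sub ha' hne hq, leadingCoeff_linear_mul_sub ha' hne hq,
      ih₁.1, ih₁.2, prod_Icc_succ_top (by omega : 1 ≤ m + 2), mul_comm]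
    exact ⟨rfl, rfl⟩

theorem exists_eq_C_mul_prod_X_sub_C [IsAlgClosed K] (hΦ : IsThreeTermRecurrence a b c Φ)
    (ha : ∀ k, 1 ≤ k → a k ≠ 0) (m : ℕ) :
    ∃ z : Fin m → K, Φ m = C (∏ k ∈ Icc 1 m, a k) * ∏ j, (X - C (z j)) := by
  obtain ⟨hdeg, hlc⟩ := hΦ.natDegree_eq_and_leadingCoeff_eq ha m
  rw [← hlc]
  exact (Φ m).exists_eq_C_leadingCoeff_mul_prod_X_sub_C hdeg

theorem eval_add_two_of_isRoot (hΦ : IsThreeTermRecurrence a b c Φ) {m : ℕ} {x : K}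
    (hx : (Φ (m + 1)).IsRoot x) : (Φ (m + 2)).eval x = -c (m + 2) * (Φ m).eval x := by
  rw [hΦ.add_two, eval_sub, eval_mul, hx.eq_zero, eval_mul, eval_C]
  ring

theorem prod_eval_roots [IsAlgClosed K] (hΦ : IsThreeTermRecurrence a b c Φ)
    (ha : ∀ k, 1 ≤ k → a k ≠ 0) (n : ℕ) (y : Fin n → K)
    (hy : Φ n = C (∏ k ∈ Icc 1 n, a k) * ∏ i, (X - C (y i))) :
    ∏ i, (Φ (n - 1)).eval (y i) = schurConst a c n := by
  induction n with
  | zero => simp [hΦ.zero, schurConst]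
  | succ m ih =>
    obtain ⟨z, hz⟩ := hΦ.exists_eq_C_mul_prod_X_sub_C ha m
    have hz_succ : ∀ j, (Φ (m + 1)).eval (z j) = -c (m + 1) * (Φ (m - 1)).eval (z j) := by
      intro j
      obtain ⟨k, rfl⟩ := Nat.exists_eq_add_one_of_ne_zero j.pos.ne'
      refine hΦ.eval_add_two_of_isRoot ?_
      rw [IsRoot, hz, eval_mul, eval_prod, prod_eq_zero (mem_univ j) (by simp), mul_zero]
    have hA : (∏ k ∈ Icc 1 (m + 1), a k) ^ m ≠ 0 :=
      pow_ne_zero m (prod_ne_zero_iff.mpr fun k hk => ha k (mem_Icc.mp hk).1)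
    have hsign : (-1 : K) ^ ((m + 1) * m) = 1 := (Nat.even_mul_pred_self (m + 1)).neg_one_pow
    apply mul_left_cancel₀ hA
    calc (∏ k ∈ Icc 1 (m + 1), a k) ^ m * ∏ i, (Φ (m + 1 - 1)).eval (y i)
        = (-1) ^ ((m + 1) * m) * (∏ k ∈ Icc 1 m, a k) ^ (m + 1) *
            ∏ j, (Φ (m + 1)).eval (z j) := by
          rw [Nat.add_sub_cancel, hz, hy]
          simpa only [Fintype.card_fin] using
            prod_eval_C_mul_prod_X_sub_C_comm (∏ k ∈ Icc 1 (m + 1), a k) (∏ k ∈ Icc 1 m, a k) y z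
      _ = (∏ k ∈ Icc 1 m, a k) ^ (m + 1) * (-c (m + 1)) ^ m * schurConst a c m := by
          rw [hsign, one_mul, prod_congr rfl fun j _ => hz_succ j, prod_mul_distrib, prod_const,
            card_univ, Fintype.card_fin, ih z hz, mul_assoc]
      _ = (∏ k ∈ Icc 1 (m + 1), a k) ^ m * schurConst a c (m + 1) :=
          (schurConst_succ c ha m).symm

end IsThreeTermRecurrence

theorem stmt_5_general (a b c : ℕ → ℂ) (Φ : ℕ → Polynomial ℂ)
    (habc : ∀ k, 1 ≤ k → a k ≠ 0 ∧ c k ≠ 0)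
    (h0 : Φ 0 = 1) (h1 : Φ 1 = C (a 1) * X + C (b 1))
    (hrec : ∀ m, 2 ≤ m →
      Φ m = (C (a m) * X + C (b m)) * Φ (m - 1) - C (c m) * Φ (m - 2))
    (n : ℕ) (y : Fin n → ℂ)
    (hroots : Φ n = C (∏ k ∈ Finset.Icc 1 n, a k) * ∏ i, (X - C (y i))) :
    ∏ i, (Φ (n - 1)).eval (y i) =
      (-1) ^ (n * (n - 1) / 2) *
        ∏ k ∈ Finset.Icc 1 n, a k ^ ((n : ℤ) - 2 * k + 1) * c k ^ (k - 1) := by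
  have hΦ : IsThreeTermRecurrence a b c Φ :=
    ⟨h0, h1, fun m => by simpa using hrec (m + 2) le_add_self⟩
  exact hΦ.prod_eval_roots (fun k hk => (habc k hk).1) n y hroots

theorem stmt_5 (a b c : ℕ → ℂ) (Φ : ℕ → Polynomial ℂ)
    (habc : ∀ k, 1 ≤ k → a k ≠ 0 ∧ c k ≠ 0)
    (h0 : Φ 0 = 1) (h1 : Φ 1 = C (a 1) * X + C (b 1))
    (hrec : ∀ m, 2 ≤ m →
      Φ m = (C (a m) * X + C (b m)) * Φ (m - 1) - C (c m) * Φ (m - 2))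
    (n : ℕ) (hn : 1 ≤ n) (y : Fin n → ℂ)
    (hroots : Φ n = C (∏ k ∈ Finset.Icc 1 n, a k) * ∏ i, (X - C (y i))) :
    ∏ i, (Φ (n - 1)).eval (y i) =
      (-1) ^ (n * (n - 1) / 2) *
        ∏ k ∈ Finset.Icc 1 n, a k ^ ((n : ℤ) - 2 * k + 1) * c k ^ (k - 1) :=
  stmt_5_general a b c Φ habc h0 h1 hrec n y hroots
end

section
/- With Φ_m as in the three-term recurrence Φ_m = (a_m x + b_m)Φ_{m−1} − c_m Φ_{m−2} (a_m c_m ≠ 0), one has Res(Φ_n + s·Φ_{n−1}, Φ_{n−1}) = Res(Φ_n, Φ_{n−1}) = (−1)^{n(n−1)/2} ∏_{k=1}^n a_k^{2n−2k} c_k^{k−1} for every n ≥ 2 and every constant s. -/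
/-!
Over `ℂ`, `Res` is the Sylvester resultant. Modulo `Φ (m+1)` the recurrence reduces `Φ (m+2)` to
`-c (m+2) • Φ m`, whose degree is two lower; the Sylvester-matrix calculus then gives
`Res(Φ_{m+2}, Φ_{m+1}) = lc(Φ_{m+1})² (-c_{m+2})^{m+1} Res(Φ_{m+1}, Φ_m)` with
`lc(Φ_{m+1}) = a_1 ⋯ a_{m+1}`, and the closed form follows by induction.
Adding `s • Φ_{n-1}` to `Φ_n` changes neither its degree nor its values at the roots of `Φ_{n-1}`,
hence not the resultant.
-/

open Polynomial

/-- The resultant: `Res f g = lc(f)^(deg g) * ∏_{α root of f} g(α)`. -/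
noncomputable def Res (f g : Polynomial ℂ) : ℂ :=
  f.leadingCoeff ^ g.natDegree * (f.roots.map (fun a => g.eval a)).prod

theorem Res_eq_resultant (f g : ℂ[X]) : Res f g = resultant f g :=
  (resultant_eq_prod_eval f g _ le_rfl (IsAlgClosed.splits f)).symm

theorem Res_add_C_mul_left {f g : ℂ[X]} (hfg : g.natDegree < f.natDegree) (s : ℂ) :
    Res (f + C s * g) g = Res f g := by
  have hdeg : (f + C s * g).natDegree = f.natDegree :=
    natDegree_add_eq_left_of_natDegree_lt ((natDegree_C_mul_le s g).trans_lt hfg)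
  rw [Res_eq_resultant, Res_eq_resultant, hdeg, mul_comm (C s)]
  exact resultant_add_mul_left f g (C s) _ _ (by simpa using hfg.le) le_rfl

theorem prod_Icc_pow_mul_pow_succ {M : Type*} [CommMonoid M] (a c : ℕ → M) (n : ℕ) :
    ∏ k ∈ Finset.Icc 1 (n + 1), a k ^ (2 * (n + 1) - 2 * k) * c k ^ (k - 1) =
      (∏ k ∈ Finset.Icc 1 n, a k) ^ 2 * c (n + 1) ^ n *
        ∏ k ∈ Finset.Icc 1 n, a k ^ (2 * n - 2 * k) * c k ^ (k - 1) := by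
  have hfactor : ∀ k ∈ Finset.Icc 1 n, a k ^ (2 * (n + 1) - 2 * k) * c k ^ (k - 1) =
      a k ^ 2 * (a k ^ (2 * n - 2 * k) * c k ^ (k - 1)) := by
    intro k hk
    rw [show 2 * (n + 1) - 2 * k = 2 + (2 * n - 2 * k) by
      have := (Finset.mem_Icc.mp hk).2; omega, pow_add, mul_assoc]
  rw [Finset.prod_Icc_succ_top (by omega), Finset.prod_congr rfl hfactor,
    Finset.prod_mul_distrib, Finset.prod_pow, Nat.sub_self, pow_zero, one_mul, Nat.add_sub_cancel]
  exact mul_right_comm _ _ _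

structure IsThreeTermRecurrence_s6 {R : Type*} [CommRing R] (a b c : ℕ → R) (Φ : ℕ → R[X]) :
    Prop where
  zero : Φ 0 = 1
  one : Φ 1 = C (a 1) * X + C (b 1)
  succ_succ : ∀ m,
    Φ (m + 2) = (C (a (m + 2)) * X + C (b (m + 2))) * Φ (m + 1) - C (c (m + 2)) * Φ m

namespace IsThreeTermRecurrence_s6

variable {R : Type*} [CommRing R] {a b c : ℕ → R} {Φ : ℕ → R[X]}

theorem natDegree_le (hΦ : IsThreeTermRecurrence_s6 a b c Φ) (m : ℕ) : (Φ m).natDegree ≤ m := by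
  induction m using Nat.twoStepInduction with
  | zero => simp [hΦ.zero]
  | one => rw [hΦ.one]; exact natDegree_linear_le
  | more m ih₀ ih₁ =>
    rw [hΦ.succ_succ]
    refine natDegree_sub_le_iff_left ?_ |>.mpr ?_
    · exact (natDegree_C_mul_le _ _).trans (ih₀.trans (by omega))
    · exact natDegree_mul_le.trans
        (by linarith [natDegree_linear_le (a := a (m + 2)) (b := b (m + 2))])

theorem coeff_self (hΦ : IsThreeTermRecurrence_s6 a b c Φ) (m : ℕ) :
    (Φ m).coeff m = ∏ k ∈ Finset.Icc 1 m, a k := by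
  induction m using Nat.twoStepInduction with
  | zero => simp [hΦ.zero]
  | one => simp [hΦ.one]
  | more m _ ih₁ =>
    have hΦ₀ : (Φ m).coeff (m + 2) = 0 :=
      coeff_eq_zero_of_natDegree_lt (by linarith [hΦ.natDegree_le m])
    have hΦ₁ : (Φ (m + 1)).coeff (m + 2) = 0 :=
      coeff_eq_zero_of_natDegree_lt (by linarith [hΦ.natDegree_le (m + 1)])
    rw [hΦ.succ_succ, Finset.prod_Icc_succ_top (by omega), ← ih₁, coeff_sub, coeff_C_mul, hΦ₀,
      add_mul, coeff_add, mul_assoc, coeff_C_mul, coeff_X_mul, coeff_C_mul, hΦ₁]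
    ring

theorem natDegree_eq [IsDomain R] (hΦ : IsThreeTermRecurrence_s6 a b c Φ)
    (ha : ∀ k, 1 ≤ k → a k ≠ 0) (m : ℕ) : (Φ m).natDegree = m := by
  refine natDegree_eq_of_le_of_coeff_ne_zero (hΦ.natDegree_le m) ?_
  rw [hΦ.coeff_self, Finset.prod_ne_zero_iff]
  exact fun k hk => ha k (Finset.mem_Icc.mp hk).1

theorem resultant_succ_succ (hΦ : IsThreeTermRecurrence_s6 a b c Φ) (m : ℕ) :
    resultant (Φ (m + 2)) (Φ (m + 1)) (m + 2) (m + 1) =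
      (Φ (m + 1)).coeff (m + 1) ^ 2 * (-c (m + 2)) ^ (m + 1) *
        resultant (Φ (m + 1)) (Φ m) (m + 1) m := by
  have hΦ₂ :
      Φ (m + 2) = C (-c (m + 2)) * Φ m + Φ (m + 1) * (C (a (m + 2)) * X + C (b (m + 2))) := by
    rw [hΦ.succ_succ]; simp only [map_neg]; ring
  rw [hΦ₂, resultant_add_mul_left _ _ _ _ _
      (by linarith [natDegree_linear_le (a := a (m + 2)) (b := b (m + 2))]) (hΦ.natDegree_le _),
    resultant_C_mul_left, resultant_add_left_deg _ _ _ _ 2 (hΦ.natDegree_le m), resultant_comm,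
    (Nat.even_mul_succ_self m).neg_one_pow, (even_two.mul_left _).neg_one_pow]
  ring

theorem resultant_succ_eq (hΦ : IsThreeTermRecurrence_s6 a b c Φ) (m : ℕ) :
    resultant (Φ (m + 1)) (Φ m) (m + 1) m =
      (-1) ^ (m + 1).choose 2 *
        ∏ k ∈ Finset.Icc 1 (m + 1), a k ^ (2 * (m + 1) - 2 * k) * c k ^ (k - 1) := by
  induction m with
  | zero => simp [hΦ.zero]
  | succ m ih =>
    rw [hΦ.resultant_succ_succ, ih, hΦ.coeff_self, prod_Icc_pow_mul_pow_succ (n := m + 1),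
      Nat.choose_succ_succ' (m + 1), Nat.choose_one_right, pow_add, neg_pow]
    ring

end IsThreeTermRecurrence_s6

theorem stmt_6 (a b c : ℕ → ℂ) (Φ : ℕ → Polynomial ℂ)
    (habc : ∀ k, 1 ≤ k → a k ≠ 0 ∧ c k ≠ 0)
    (h0 : Φ 0 = 1) (h1 : Φ 1 = C (a 1) * X + C (b 1))
    (hrec : ∀ m, 2 ≤ m →
      Φ m = (C (a m) * X + C (b m)) * Φ (m - 1) - C (c m) * Φ (m - 2))
    (n : ℕ) (hn : 2 ≤ n) (s : ℂ) :
    Res (Φ n + C s * Φ (n - 1)) (Φ (n - 1)) = Res (Φ n) (Φ (n - 1)) ∧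
      Res (Φ n) (Φ (n - 1)) =
        (-1) ^ (n * (n - 1) / 2) *
          ∏ k ∈ Finset.Icc 1 n, a k ^ (2 * n - 2 * k) * c k ^ (k - 1) := by
  have hΦ : IsThreeTermRecurrence_s6 a b c Φ := ⟨h0, h1, fun m => hrec (m + 2) (by omega)⟩
  have hdeg := hΦ.natDegree_eq fun k hk => (habc k hk).1
  rw [← Nat.choose_two_right]
  obtain ⟨m, rfl⟩ : ∃ m, n = m + 1 := ⟨n - 1, by omega⟩
  rw [Nat.add_sub_cancel]
  refine ⟨Res_add_C_mul_left (by rw [hdeg, hdeg]; omega) s, ?_⟩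
  rw [Res_eq_resultant, hdeg, hdeg, hΦ.resultant_succ_eq]
end

section
/- Let U_{n;c}(x) = U_n(x) + c·U_{n−1}(x) with U_m the Chebyshev polynomial of the second kind. For n ≥ 2 and constants s, t with t ≠ 0: Res(U_{n;s}, U_{n−1;t}) = (−1)^{n(n+1)/2} · 2^{n(n−1)} · t^n · U_{n;s}(−(1+st)/(2t)). -/
/-!
At a root `a` of `f = U_n + s U_{n-1}` the recurrence `U_{n-2} = 2x U_{n-1} - U_n` gives
`g(a) = 2t (a - r) U_{n-1}(a)` for `g = U_{n-1} + t U_{n-2}` and `r = -(1 + st)/(2t)`. So the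
product of `g` over the roots of `f` splits into `∏ (a - r) = ± f(r) / lc f` and
`∏_{f(a) = 0} U_{n-1}(a)`. By the symmetry `Res(f, h) = (-1)^(deg f * deg h) Res(h, f)`, with
`n (n - 1)` even and `lc(f)^(n-1) = lc(U_{n-1})^n`, the latter equals
`∏_{U_{n-1}(b) = 0} f(b) = ∏_{U_{n-1}(b) = 0} U_n(b)`. Finally
`∏_{U_m(b) = 0} U_{m+1}(b) = (-1)^(m(m+1)/2)` by induction, because `U_{m+2} = -U_m` at the
roots of `U_{m+1}`.
-/

open Polynomial Polynomial.Chebyshev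

theorem pow_triangle_succ {M : Type*} [Monoid M] (a : M) (m : ℕ) :
    a ^ ((m + 1) * (m + 2) / 2) = a ^ (m + 1) * a ^ (m * (m + 1) / 2) := by
  rw [← pow_add]
  obtain ⟨k, hk⟩ := Nat.even_mul_succ_self m
  have : (m + 1) * (m + 2) = m * (m + 1) + 2 * (m + 1) := by ring
  congr 1
  omega

noncomputable def rootProd (f g : ℂ[X]) : ℂ := (f.roots.map fun a => g.eval a).prod

theorem Res_eq_leadingCoeff_pow_mul_rootProd (f g : ℂ[X]) :
    Res f g = f.leadingCoeff ^ g.natDegree * rootProd f g := rfl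

section RootProd

variable (f g h : ℂ[X])

theorem card_roots_eq_natDegree : f.roots.card = f.natDegree :=
  (IsAlgClosed.splits f).natDegree_eq_card_roots.symm

theorem prod_roots_map_const_mul (c : ℂ) (F : ℂ → ℂ) :
    (f.roots.map fun a => c * F a).prod = c ^ f.natDegree * (f.roots.map F).prod := by
  rw [Multiset.prod_map_mul, Multiset.map_const', Multiset.prod_replicate,
    card_roots_eq_natDegree]

theorem prod_roots_sub_comm (x : ℂ) :
    (f.roots.map fun a => x - a).prod =
      (-1) ^ f.natDegree * (f.roots.map fun a => a - x).prod := by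
  rw [← prod_roots_map_const_mul]
  simp only [neg_one_mul, neg_sub]

variable {g h} in
theorem rootProd_congr (hgh : ∀ a ∈ f.roots, g.eval a = h.eval a) :
    rootProd f g = rootProd f h :=
  congrArg Multiset.prod (Multiset.map_congr rfl hgh)

theorem rootProd_mul : rootProd f (g * h) = rootProd f g * rootProd f h := by
  simp only [rootProd, eval_mul, Multiset.prod_map_mul]

theorem rootProd_C (c : ℂ) : rootProd f (C c) = c ^ f.natDegree := by
  simp only [rootProd, eval_C, Multiset.map_const', Multiset.prod_replicate,
    card_roots_eq_natDegree]

theorem leadingCoeff_mul_rootProd_X_sub_C (r : ℂ) :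
    f.leadingCoeff * rootProd f (X - C r) = (-1) ^ f.natDegree * f.eval r := by
  rw [(IsAlgClosed.splits f).eval_eq_prod_roots, prod_roots_sub_comm, mul_left_comm,
    ← mul_assoc ((-1 : ℂ) ^ f.natDegree), ← pow_add, Even.neg_one_pow ⟨_, rfl⟩, one_mul]
  simp only [rootProd, eval_sub, eval_X, eval_C]

theorem rootProd_eq_prod_prod_roots_sub : rootProd f g =
    g.leadingCoeff ^ f.natDegree *
      (f.roots.map fun a => (g.roots.map fun b => a - b).prod).prod := by
  rw [rootProd, ← prod_roots_map_const_mul]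
  exact congrArg _ (Multiset.map_congr rfl fun a _ => (IsAlgClosed.splits g).eval_eq_prod_roots a)

theorem Res_comm : Res f g = (-1) ^ (f.natDegree * g.natDegree) * Res g f := by
  simp only [Res_eq_leadingCoeff_pow_mul_rootProd, rootProd_eq_prod_prod_roots_sub]
  simp only [prod_roots_sub_comm g, prod_roots_map_const_mul, Multiset.prod_map_prod_map f.roots]
  ring

variable {f g} in
theorem rootProd_comm (hf : f ≠ 0)
    (hlc : f.leadingCoeff ^ g.natDegree = g.leadingCoeff ^ f.natDegree)
    (heven : Even (f.natDegree * g.natDegree)) : rootProd f g = rootProd g f := by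
  have := Res_comm f g
  rw [heven.neg_one_pow, one_mul, Res_eq_leadingCoeff_pow_mul_rootProd,
    Res_eq_leadingCoeff_pow_mul_rootProd, hlc] at this
  exact mul_left_cancel₀ (hlc ▸ pow_ne_zero _ (leadingCoeff_ne_zero.mpr hf)) this

end RootProd
section Chebyshev

variable {R : Type*} [CommRing R]

theorem degree_C_mul_lt {p q : R[X]} (c : R) (h : q.degree < p.degree) :
    (C c * q).degree < p.degree := by
  rw [← smul_eq_C_mul]
  exact (degree_smul_le c q).trans_lt h

theorem natDegree_add_C_mul_of_degree_lt {p q : R[X]} (c : R) (h : q.degree < p.degree) :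
    (p + C c * q).natDegree = p.natDegree :=
  natDegree_add_eq_left_of_degree_lt (degree_C_mul_lt c h)

theorem leadingCoeff_add_C_mul_of_degree_lt {p q : R[X]} (c : R) (h : q.degree < p.degree) :
    (p + C c * q).leadingCoeff = p.leadingCoeff :=
  leadingCoeff_add_of_degree_lt' (degree_C_mul_lt c h)

theorem eval_U_add_C_mul_U_sub_one_of_root {n : ℤ} {s x : R} (t : R)
    (hx : (U R (n + 1) + C s * U R n).eval x = 0) :
    (U R n + C t * U R (n - 1)).eval x = (2 * t * x + 1 + s * t) * (U R n).eval x := by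
  rw [U_sub_one]
  simp only [eval_add, eval_mul, eval_C, eval_sub, eval_ofNat, eval_X] at hx ⊢
  linear_combination (-t) * hx

variable [IsDomain R] [NeZero (2 : R)]

theorem degree_U_sub_one_lt (n : ℕ) : (U R ((n : ℤ) - 1)).degree < (U R n).degree := by
  cases n with
  | zero => simp
  | succ m =>
    rw [Nat.cast_succ, add_sub_cancel_right, ← Nat.cast_succ, degree_U_natCast, degree_U_natCast]
    exact_mod_cast m.lt_succ_self

theorem natDegree_U_add_one (m : ℕ) : (U R ((m : ℤ) + 1)).natDegree = m + 1 := by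
  exact_mod_cast natDegree_U_natCast R (m + 1)

theorem leadingCoeff_U_add_one (m : ℕ) : (U R ((m : ℤ) + 1)).leadingCoeff = 2 ^ (m + 1) := by
  exact_mod_cast leadingCoeff_U_natCast R (m + 1)

end Chebyshev

theorem rootProd_U_U_add_one (m : ℕ) :
    rootProd (U ℂ m) (U ℂ ((m : ℤ) + 1)) = (-1) ^ (m * (m + 1) / 2) := by
  induction m with
  | zero => simp [rootProd]
  | succ m ih =>
    push_cast
    have hroot : ∀ a ∈ (U ℂ ((m : ℤ) + 1)).roots,
        (U ℂ ((m : ℤ) + 1 + 1)).eval a = (C (-1) * U ℂ m).eval a := by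
      intro a ha
      rw [U_add_one, add_sub_cancel_right]
      simp [(mem_roots'.mp ha).2.eq_zero]
    have hcomm :
        rootProd (U ℂ ((m : ℤ) + 1)) (U ℂ m) = rootProd (U ℂ m) (U ℂ ((m : ℤ) + 1)) :=
      rootProd_comm (U_ne_zero ℂ _ (by omega))
        (by rw [natDegree_U_natCast, natDegree_U_add_one, leadingCoeff_U_natCast,
          leadingCoeff_U_add_one, pow_right_comm])
        (by
          rw [natDegree_U_natCast, natDegree_U_add_one, mul_comm]
          exact Nat.even_mul_succ_self m)
    rw [rootProd_congr _ hroot, rootProd_mul, rootProd_C, hcomm, ih, natDegree_U_add_one,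
      pow_triangle_succ]

theorem Res_U_add_C_mul_U (m : ℕ) (s : ℂ) {t : ℂ} (ht : t ≠ 0) :
    Res (U ℂ ((m : ℤ) + 1) + C s * U ℂ m) (U ℂ m + C t * U ℂ ((m : ℤ) - 1)) =
      (-1) ^ ((m + 1) * (m + 2) / 2) * 2 ^ ((m + 1) * m) * t ^ (m + 1) *
        (U ℂ ((m : ℤ) + 1) + C s * U ℂ m).eval (-(1 + s * t) / (2 * t)) := by
  set f := U ℂ ((m : ℤ) + 1) + C s * U ℂ m
  set r := -(1 + s * t) / (2 * t)
  have hf_lt : (U ℂ m).degree < (U ℂ ((m : ℤ) + 1)).degree := by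
    simpa using degree_U_sub_one_lt (R := ℂ) (m + 1)
  have hfd : f.natDegree = m + 1 := by
    rw [natDegree_add_C_mul_of_degree_lt _ hf_lt, natDegree_U_add_one]
  have hfl : f.leadingCoeff = 2 ^ (m + 1) := by
    rw [leadingCoeff_add_C_mul_of_degree_lt _ hf_lt, leadingCoeff_U_add_one]
  have hgd : (U ℂ m + C t * U ℂ ((m : ℤ) - 1)).natDegree = m := by
    rw [natDegree_add_C_mul_of_degree_lt _ (degree_U_sub_one_lt m), natDegree_U_natCast]
  have hg_roots : ∀ a ∈ f.roots, (U ℂ m + C t * U ℂ ((m : ℤ) - 1)).eval a =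
      (C (2 * t) * (X - C r) * U ℂ m).eval a := by
    intro a ha
    rw [eval_U_add_C_mul_U_sub_one_of_root t (mem_roots'.mp ha).2.eq_zero]
    simp only [eval_mul, eval_C, eval_sub, eval_X, r]
    field_simp
    ring
  have hlin : rootProd f (X - C r) = (-1) ^ (m + 1) * f.eval r / 2 ^ (m + 1) := by
    rw [eq_div_iff (pow_ne_zero _ two_ne_zero), mul_comm, ← hfl, ← hfd,
      leadingCoeff_mul_rootProd_X_sub_C]
  have hU : rootProd f (U ℂ m) = (-1) ^ (m * (m + 1) / 2) := by
    have hroots : ∀ b ∈ (U ℂ m).roots, f.eval b = (U ℂ ((m : ℤ) + 1)).eval b := by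
      intro b hb
      simp [f, (mem_roots'.mp hb).2.eq_zero]
    have hf : f ≠ 0 := leadingCoeff_ne_zero.mp (by rw [hfl]; exact pow_ne_zero _ two_ne_zero)
    rw [rootProd_comm hf
      (by rw [hfl, hfd, natDegree_U_natCast, leadingCoeff_U_natCast, pow_right_comm])
      (by rw [hfd, natDegree_U_natCast, mul_comm]; exact Nat.even_mul_succ_self m),
      rootProd_congr _ hroots, rootProd_U_U_add_one]
  rw [Res_eq_leadingCoeff_pow_mul_rootProd, rootProd_congr _ hg_roots, rootProd_mul,
    rootProd_mul, rootProd_C, hlin, hU, hfl, hgd, hfd, pow_triangle_succ]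
  field_simp
  ring

theorem stmt_9_general (n : ℕ) (s t : ℂ) (ht : t ≠ 0) :
    Res (U ℂ n + C s * U ℂ ((n : ℤ) - 1)) (U ℂ ((n : ℤ) - 1) + C t * U ℂ ((n : ℤ) - 2)) =
      (-1) ^ (n * (n + 1) / 2) * 2 ^ (n * (n - 1)) * t ^ n *
        (U ℂ n + C s * U ℂ ((n : ℤ) - 1)).eval (-(1 + s * t) / (2 * t)) := by
  cases n with
  | zero => simp [Res]
  | succ m =>
    push_cast
    rw [add_sub_cancel_right, show (m : ℤ) + 1 - 2 = m - 1 by ring]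
    simpa using Res_U_add_C_mul_U m s ht

theorem stmt_9 (n : ℕ) (hn : 2 ≤ n) (s t : ℂ) (ht : t ≠ 0) :
    Res (U ℂ n + C s * U ℂ ((n : ℤ) - 1)) (U ℂ ((n : ℤ) - 1) + C t * U ℂ ((n : ℤ) - 2)) =
      (-1) ^ (n * (n + 1) / 2) * 2 ^ (n * (n - 1)) * t ^ n *
        (U ℂ n + C s * U ℂ ((n : ℤ) - 1)).eval (-(1 + s * t) / (2 * t)) :=
  stmt_9_general n s t ht
end

section
/- disc(H_n) = 2^{3n(n−1)/2} · ∏_{k=1}^n k^k, where H_n is the n-th Hermite polynomial. -/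
open Polynomial

/-- The discriminant of a polynomial. -/
noncomputable def disc (f : Polynomial ℂ) : ℂ :=
  (-1) ^ (f.natDegree * (f.natDegree - 1) / 2) / f.leadingCoeff * Res f (derivative f)

/-- The physicists' Hermite polynomials. -/
noncomputable def H : ℕ → Polynomial ℂ
  | 0 => 1
  | 1 => 2 * X
  | (n + 2) => 2 * X * H (n + 1) - C (2 * (n + 1 : ℂ)) * H n

lemma C2 : (C 2 : Polynomial ℂ) = 2 := map_ofNat C 2

lemma H_deg_lc : ∀ n : ℕ, (H n).natDegree = n ∧ (H n).leadingCoeff = 2 ^ n := by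
  intro n
  induction n using Nat.strong_induction_on with
  | _ n ih =>
    match n with
    | 0 => constructor <;> simp [H]
    | 1 =>
      constructor
      · simpa [H] using natDegree_C_mul_X (2:ℂ) two_ne_zero
      · rw [H, ← C2, leadingCoeff_mul, leadingCoeff_C, leadingCoeff_X, mul_one, pow_one]
    | (n+2) =>
      obtain ⟨hd1, hl1⟩ := ih (n+1) (by omega)
      obtain ⟨hd0, hl0⟩ := ih n (by omega)
      have h1ne : H (n+1) ≠ 0 := by
        intro h; rw [h] at hl1; simp at hl1
        exact (pow_ne_zero _ (two_ne_zero)) hl1.symm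
      have h2X : (2 * X : Polynomial ℂ) ≠ 0 := by
        rw [← C2]
        intro h
        have := natDegree_C_mul_X (2:ℂ) two_ne_zero
        rw [h] at this
        simp at this
      have hdf : (2 * X * H (n+1)).natDegree = n + 2 := by
        rw [natDegree_mul h2X h1ne, hd1, ← C2, natDegree_C_mul_X (2:ℂ) two_ne_zero]
        omega
      have hlf : (2 * X * H (n+1)).leadingCoeff = 2 ^ (n+2) := by
        rw [leadingCoeff_mul, hl1, ← C2, leadingCoeff_mul, leadingCoeff_C, leadingCoeff_X]
        ring
      have hdg : (C (2 * (n + 1 : ℂ)) * H n).natDegree < n + 2 := by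
        calc (C (2 * (n + 1 : ℂ)) * H n).natDegree ≤ (H n).natDegree := natDegree_C_mul_le _ _
        _ < n + 2 := by omega
      have hd : (H (n+2)).natDegree = n + 2 := by
        rw [H, natDegree_sub_eq_left_of_natDegree_lt (lt_of_lt_of_eq hdg hdf.symm), hdf]
      refine ⟨hd, ?_⟩
      rw [leadingCoeff, hd, H, coeff_sub,
          coeff_eq_zero_of_natDegree_lt hdg, sub_zero, ← hdf, coeff_natDegree, hlf, hdf]

lemma H_natDegree (n : ℕ) : (H n).natDegree = n := (H_deg_lc n).1
lemma H_lc (n : ℕ) : (H n).leadingCoeff = 2 ^ n := (H_deg_lc n).2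
lemma H_ne (n : ℕ) : H n ≠ 0 := by
  intro h
  have := H_lc n
  rw [h] at this
  exact (pow_ne_zero n (two_ne_zero (α := ℂ))) (by simpa using this.symm)

lemma H_deriv : ∀ n : ℕ, derivative (H (n+1)) = C (2*(n+1:ℂ)) * H n := by
  intro n
  induction n using Nat.strong_induction_on with
  | _ n ih =>
    match n with
    | 0 => simp [H, C2]
    | 1 => simp [H, C2]; ring
    | (m+2) =>
      have i1 := ih (m+1) (by omega)
      have i0 := ih m (by omega)
      show derivative (H (m+3)) = _
      rw [show H (m+3) = 2 * X * H (m + 2) - C (2 * (((m+1 : ℕ) : ℂ) + 1)) * H (m+1) from rfl]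
      have i1' : derivative (H (m+2)) = C (2 * (((m+1:ℕ) : ℂ) + 1)) * H (m + 1) := i1
      rw [derivative_sub, derivative_mul, derivative_mul, derivative_mul, derivative_C, i1', i0]
      rw [show H (m+2) = 2 * X * H (m + 1) - C (2 * ((m : ℂ) + 1)) * H m from rfl]
      simp only [C_mul, C_add, C_1, C2, C_eq_natCast, derivative_ofNat, derivative_X]
      push_cast
      ring

lemma roots_card (f : Polynomial ℂ) : Multiset.card f.roots = f.natDegree :=
  splits_iff_card_roots.mp (IsAlgClosed.splits f)

lemma eval_eq_prod (f : Polynomial ℂ) (x : ℂ) :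
    f.eval x = f.leadingCoeff * (f.roots.map (fun a => x - a)).prod := by
  conv_lhs => rw [← C_leadingCoeff_mul_prod_multiset_X_sub_C (roots_card f)]
  rw [eval_mul, eval_C, eval_multiset_prod, Multiset.map_map]
  simp [Function.comp]

lemma prod_map_const (A : Multiset ℂ) (c : ℂ) :
    (A.map (fun _ => c)).prod = c ^ Multiset.card A := by
  rw [show (fun _ : ℂ => c) = Function.const ℂ c from rfl, Multiset.map_const,
    Multiset.prod_replicate]

lemma fubini (A B : Multiset ℂ) :
    (A.map (fun a => (B.map (fun b => a - b)).prod)).prod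
      = (B.map (fun b => (A.map (fun a => a - b)).prod)).prod := by
  induction A using Multiset.induction with
  | empty => simp [prod_map_const]
  | cons a A ihA =>
    rw [Multiset.map_cons, Multiset.prod_cons, ihA, ← Multiset.prod_map_mul]
    congr 1
    refine Multiset.map_congr rfl (fun b _ => ?_)
    rw [Multiset.map_cons, Multiset.prod_cons]

lemma neg_prod (A : Multiset ℂ) (b : ℂ) :
    (A.map (fun a => a - b)).prod = (-1) ^ Multiset.card A * (A.map (fun a => b - a)).prod := by
  have : (A.map (fun a => a - b)).prod = (A.map (fun a => (-1) * (b - a))).prod := by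
    congr 1
    apply Multiset.map_congr rfl
    intro x _
    ring
  rw [this, Multiset.prod_map_mul, prod_map_const]

lemma res_sym (f g : Polynomial ℂ) :
    f.leadingCoeff ^ g.natDegree * (f.roots.map (fun a => g.eval a)).prod
      = (-1) ^ (f.natDegree * g.natDegree)
        * (g.leadingCoeff ^ f.natDegree * (g.roots.map (fun b => f.eval b)).prod) := by
  have hf := roots_card f
  have hg := roots_card g
  have L : (f.roots.map (fun a => g.eval a)).prod
      = g.leadingCoeff ^ f.natDegree
        * (f.roots.map (fun a => (g.roots.map (fun b => a - b)).prod)).prod := by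
    have : (f.roots.map (fun a => g.eval a)).prod
        = (f.roots.map (fun a => g.leadingCoeff * (g.roots.map (fun b => a - b)).prod)).prod := by
      congr 1
      exact Multiset.map_congr rfl (fun x _ => eval_eq_prod g x)
    rw [this, Multiset.prod_map_mul, prod_map_const, hf]
  have R : (g.roots.map (fun b => f.eval b)).prod
      = f.leadingCoeff ^ g.natDegree
        * (g.roots.map (fun b => (f.roots.map (fun a => b - a)).prod)).prod := by
    have : (g.roots.map (fun b => f.eval b)).prod
        = (g.roots.map (fun b => f.leadingCoeff * (f.roots.map (fun a => b - a)).prod)).prod := by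
      congr 1
      exact Multiset.map_congr rfl (fun x _ => eval_eq_prod f x)
    rw [this, Multiset.prod_map_mul, prod_map_const, hg]
  rw [L, R, fubini]
  have : (g.roots.map (fun b => (f.roots.map (fun a => a - b)).prod)).prod
      = (-1) ^ (f.natDegree * g.natDegree)
        * (g.roots.map (fun b => (f.roots.map (fun a => b - a)).prod)).prod := by
    have : (g.roots.map (fun b => (f.roots.map (fun a => a - b)).prod)).prod
        = (g.roots.map (fun b =>
            (-1) ^ f.natDegree * (f.roots.map (fun a => b - a)).prod)).prod := by
      congr 1
      exact Multiset.map_congr rfl (fun x _ => by rw [neg_prod, hf])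
    rw [this, Multiset.prod_map_mul, prod_map_const, hg, ← pow_mul]
  rw [this]
  ring

noncomputable def Q (n : ℕ) : ℂ := ((H (n+1)).roots.map (fun a => (H n).eval a)).prod

lemma Q_zero : Q 0 = 1 := by
  have : ((H 1).roots.map (fun a => (H 0).eval a)).prod
      = ((H 1).roots.map (fun _ => (1:ℂ))).prod := by
    congr 1
    exact Multiset.map_congr rfl (fun x _ => by simp [H])
  rw [Q, this, prod_map_const, one_pow]

lemma Q_succ (n : ℕ) : Q (n+1) = (-(2*(n+1:ℂ)))^(n+1) * Q n := by
  have key := res_sym (H (n+2)) (H (n+1))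
  have hcard : Multiset.card (H (n+1)).roots = n + 1 := by
    rw [roots_card, H_natDegree]
  have heval : ((H (n+1)).roots.map (fun b => (H (n+2)).eval b)).prod
      = (-(2*(n+1:ℂ)))^(n+1) * Q n := by
    have : ((H (n+1)).roots.map (fun b => (H (n+2)).eval b)).prod
        = ((H (n+1)).roots.map (fun b => (-(2*(n+1:ℂ))) * (H n).eval b)).prod := by
      congr 1
      refine Multiset.map_congr rfl (fun b hb => ?_)
      have hroot : (H (n+1)).eval b = 0 := isRoot_of_mem_roots hb
      rw [show H (n+2) = 2 * X * H (n + 1) - C (2 * ((n:ℂ) + 1)) * H n from rfl]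
      simp [hroot]
    rw [this, Multiset.prod_map_mul, prod_map_const, hcard, Q]
  rw [H_lc, H_lc, H_natDegree, H_natDegree, heval] at key
  have hone : ((-1:ℂ)) ^ ((n+2) * (n+1)) = 1 :=
    Even.neg_one_pow (by rw [Nat.mul_comm]; exact Nat.even_mul_succ_self (n+1))
  rw [hone, one_mul] at key
  have hpow : ((2:ℂ) ^ (n+2)) ^ (n+1) = ((2:ℂ) ^ (n+1)) ^ (n+2) := by
    rw [← pow_mul, ← pow_mul, Nat.mul_comm]
  rw [hpow] at key
  have h2 : ((2:ℂ) ^ (n+1)) ^ (n+2) ≠ 0 := pow_ne_zero _ (pow_ne_zero _ two_ne_zero)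
  have hQ : Q (n+1) = (Multiset.map (fun a => eval a (H (n + 1))) (H (n + 2)).roots).prod := rfl
  exact mul_left_cancel₀ h2 (by rw [hQ]; exact key)

lemma Q_closed (n : ℕ) : Q n = ∏ k ∈ Finset.Icc 1 n, (-(2*(k:ℂ)))^k := by
  induction n with
  | zero => simpa using Q_zero
  | succ n ih =>
    rw [Q_succ, ih, Finset.prod_Icc_succ_top (by omega)]
    push_cast
    ring

lemma gauss (m : ℕ) : (∑ k ∈ Finset.Icc 1 m, k) * 2 = m * (m+1) := by
  induction m with
  | zero => simp
  | succ m ih => rw [Finset.sum_Icc_succ_top (by omega)]; ring_nf; ring_nf at ih; omega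

lemma Q_split (m : ℕ) :
    Q m = (-1) ^ ((m+1) * m / 2) * 2 ^ ((m+1) * m / 2) * ∏ k ∈ Finset.Icc 1 m, (k:ℂ)^k := by
  have hsum : ∑ k ∈ Finset.Icc 1 m, k = (m+1) * m / 2 := by
    rw [show (m+1)*m = (∑ k ∈ Finset.Icc 1 m, k) * 2 from by rw [gauss m]; ring]
    omega
  rw [Q_closed]
  have : ∀ k ∈ Finset.Icc 1 m, (-(2*(k:ℂ)))^k = (-1)^k * 2^k * (k:ℂ)^k := by
    intro k _
    rw [show (-(2*(k:ℂ))) = (-1) * 2 * k by ring, mul_pow, mul_pow]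
  rw [Finset.prod_congr rfl this, Finset.prod_mul_distrib, Finset.prod_mul_distrib,
    Finset.prod_pow_eq_pow_sum, Finset.prod_pow_eq_pow_sum, hsum]

theorem stmt_13 (n : ℕ) (hn : 1 ≤ n) :
    disc (H n) = 2 ^ (3 * n * (n - 1) / 2) * ∏ k ∈ Finset.Icc 1 n, (k : ℂ) ^ k := by
  obtain ⟨m, rfl⟩ : ∃ m, n = m + 1 := ⟨n - 1, by omega⟩
  have hc2 : (2*((m:ℂ)+1)) ≠ 0 := by
    refine mul_ne_zero two_ne_zero ?_
    exact_mod_cast Nat.cast_add_one_ne_zero (R := ℂ) m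
  have hprod : ((H (m+1)).roots.map (fun a => (C (2*((m:ℂ)+1)) * H m).eval a)).prod
      = (2*((m:ℂ)+1))^(m+1) * Q m := by
    have h1 : ((H (m+1)).roots.map (fun a => (C (2*((m:ℂ)+1)) * H m).eval a))
        = ((H (m+1)).roots.map (fun a => (2*((m:ℂ)+1)) * (H m).eval a)) :=
      Multiset.map_congr rfl (fun x _ => by simp)
    rw [h1, Multiset.prod_map_mul, prod_map_const, roots_card, H_natDegree]
    rfl
  rw [disc, Res, H_natDegree, H_lc, H_deriv m, natDegree_C_mul hc2, H_natDegree, hprod,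
    Q_split]
  rw [Finset.prod_Icc_succ_top (by omega : 1 ≤ m + 1)]
  obtain ⟨c, hc⟩ := Nat.even_mul_succ_self m
  have h1 : (m+1) * ((m+1) - 1) / 2 = c := by
    rw [show (m+1)*((m+1)-1) = c + c from by rw [Nat.add_sub_cancel, ← hc]; ring]
    omega
  have h1' : (m+1) * m / 2 = c := by
    rw [show (m+1)*m = c + c from by rw [← hc]; ring]; omega
  have h2 : 3 * (m+1) * ((m+1) - 1) / 2 = (m+1)*m + c := by
    rw [show 3*(m+1)*((m+1)-1) = (c+c) + (c+c) + (c+c) from by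
      rw [Nat.add_sub_cancel, ← hc]; ring, show (m+1)*m = c + c from by rw [← hc]; ring]
    omega
  rw [h1, h1', h2, mul_pow, pow_add (2:ℂ) ((m+1)*m) c, pow_mul (2:ℂ) (m+1) m]
  push_cast
  rw [div_mul_eq_mul_div, div_eq_iff (pow_ne_zero _ (two_ne_zero (α := ℂ)))]
  have key : ((-1:ℂ))^c * (-1)^c = 1 := by
    rw [← pow_add]; exact Even.neg_one_pow ⟨c, rfl⟩
  linear_combination (((2:ℂ)^(m+1))^m * 2^c * ((m:ℂ)+1)^(m+1) * (∏ k ∈ Finset.Icc 1 m, (k:ℂ)^k) * 2^(m+1)) * key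
end
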